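/- arXiv:2110.11336 — 2 statements merged into one kernel-verified Lean document; each statement's English description precedes it below -/
import Mathlib

section
/- Let A be a finite set with subsets A_1, …, A_n, and let d_1, …, d_n be positive integers. Then there exist pairwise disjoint subsets D_k ⊆ A_k with |D_k| = d_k for all k ∈ [n] if and only if |⋃_{i∈I} A_i| ≥ ∑_{i∈I} d_i for all I ⊆ [n]. -/
theorem stmt_2 {α : Type*} [DecidableEq α] (A : Finset α) (n : ℕ)
    (A' : Fin n → Finset α) (hsub : ∀ k, A' k ⊆ A)
    (d : Fin n → ℕ) (hd : ∀ k, 0 < d k) :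
    (∃ D : Fin n → Finset α, (∀ k, D k ⊆ A' k) ∧ (∀ k, (D k).card = d k) ∧
      Pairwise (fun i j => Disjoint (D i) (D j))) ↔
    (∀ I : Finset (Fin n), ∑ i ∈ I, d i ≤ (I.biUnion A').card) := by
  constructor
  · rintro ⟨D, hDs, hDc, hDd⟩ I
    calc ∑ i ∈ I, d i = ∑ i ∈ I, (D i).card := by simp [hDc]
      _ = (I.biUnion D).card := (Finset.card_biUnion (fun i _ j _ hij => hDd hij)).symm
      _ ≤ (I.biUnion A').card := Finset.card_le_card
          (Finset.biUnion_subset.mpr fun i hi =>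
            (hDs i).trans (Finset.subset_biUnion_of_mem A' hi))
  · intro hHall
    set t : (Σ i : Fin n, Fin (d i)) → Finset α := fun x => A' x.1 with ht
    have key : ∀ s : Finset (Σ i : Fin n, Fin (d i)), s.card ≤ (s.biUnion t).card := by
      intro s
      have h1 : s.biUnion t = (s.image Sigma.fst).biUnion A' := by
        ext a
        simp only [ht, Finset.mem_biUnion, Finset.mem_image]
        constructor
        · rintro ⟨x, hx, ha⟩; exact ⟨x.1, ⟨x, hx, rfl⟩, ha⟩
        · rintro ⟨i, ⟨x, hx, rfl⟩, ha⟩; exact ⟨x, hx, ha⟩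
      have h2 : s ⊆ (s.image Sigma.fst).sigma (fun i => (Finset.univ : Finset (Fin (d i)))) := by
        intro x hx
        rw [Finset.mem_sigma]
        exact ⟨Finset.mem_image_of_mem _ hx, Finset.mem_univ _⟩
      calc s.card ≤ ((s.image Sigma.fst).sigma (fun i => (Finset.univ : Finset (Fin (d i))))).card :=
            Finset.card_le_card h2
        _ = ∑ i ∈ s.image Sigma.fst, d i := by simp [Finset.card_sigma]
        _ ≤ ((s.image Sigma.fst).biUnion A').card := hHall _
        _ = (s.biUnion t).card := by rw [h1]
    obtain ⟨f, hfinj, hfmem⟩ := (Finset.all_card_le_biUnion_card_iff_existsInjective' t).mp key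
    refine ⟨fun i => (Finset.univ : Finset (Fin (d i))).image (fun j => f ⟨i, j⟩), ?_, ?_, ?_⟩
    · intro k a ha
      simp at ha
      obtain ⟨j, rfl⟩ := ha
      exact hfmem ⟨k, j⟩
    · intro k
      rw [Finset.card_image_of_injective _ (fun j j' h => by
        have := hfinj h; simpa using this)]
      simp
    · intro i j hij
      simp only [Finset.disjoint_left, Finset.mem_image]
      rintro a ⟨x, _, rfl⟩ ⟨y, _, hy⟩
      have := hfinj hy.symm
      exact hij (congrArg Sigma.fst this)
end

section
/- Let (Ω, S, ν) be a finite non-atomic measure space, A_1, …, A_n measurable, and ξ > 0. For each nonempty Q ⊆ [n] let S_Q = (⋂_{i∈Q} A_i) \ (⋃_{i∉Q} A_i), and let E_{Q,ξ} ⊆ S_Q be measurable with ν(E_{Q,ξ}) = ξ·⌊ν(S_Q)/ξ⌋. Define A_{k,ξ} = ⋃_{Q : k∈Q} E_{Q,ξ}. Then for every nonempty Q ⊆ [n], 0 ≤ ν(⋃_{i∈Q} A_i) − ν(⋃_{i∈Q} A_{i,ξ}) < ξ·(2^n − 2^{n−|Q|}). -/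
/-!
The cells `S_P` partition `⋃ i, A i`, and `⋃ i ∈ Q, A'_i` contains the piece `E_P` of every
cell `S_P` with `P ∩ Q ≠ ∅`, so the loss is at most the sum over those `P` of
`ν(S_P) - ξ⌊ν(S_P)/ξ⌋ < ξ`; there are `2^n - 2^(n - |Q|)` such `P`.
-/

open MeasureTheory Finset

section VennCells

variable {Ω ι : Type*} [Fintype ι] [DecidableEq ι]

def vennCell (A : ι → Set Ω) (P : Finset ι) : Set Ω :=
  (⋂ i ∈ P, A i) \ ⋃ i ∈ Pᶜ, A i

lemma vennCell_subset {A : ι → Set Ω} {P : Finset ι} {i : ι} (hi : i ∈ P) :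
    vennCell A P ⊆ A i :=
  Set.sdiff_subset.trans (Set.biInter_subset_of_mem hi)

lemma biUnion_biUnion_subset_biUnion {A : ι → Set Ω} {E : Finset ι → Set Ω}
    (hE : ∀ P : Finset ι, P.Nonempty → E P ⊆ vennCell A P) (Q : Finset ι) :
    ⋃ i ∈ Q, ⋃ P ∈ {P : Finset ι | i ∈ P}, E P ⊆ ⋃ i ∈ Q, A i :=
  Set.biUnion_mono subset_rfl fun i _ =>
    Set.iUnion₂_subset fun P hiP => (hE P ⟨i, hiP⟩).trans (vennCell_subset hiP)

lemma biUnion_subset_union_biUnion_vennCell_sdiff (A : ι → Set Ω) (E : Finset ι → Set Ω)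
    (Q : Finset ι) :
    ⋃ i ∈ Q, A i ⊆ (⋃ i ∈ Q, ⋃ P ∈ {P : Finset ι | i ∈ P}, E P) ∪
      ⋃ P ∈ ({P | (P ∩ Q).Nonempty} : Finset (Finset ι)), (vennCell A P \ E P) := by
  classical
  intro x hx
  obtain ⟨i, hiQ, hxi⟩ := Set.mem_iUnion₂.mp hx
  have hiP : i ∈ ({j | x ∈ A j} : Finset ι) := by simpa using hxi
  by_cases hxE : x ∈ E {j | x ∈ A j}
  · exact Or.inl (Set.mem_biUnion hiQ (Set.mem_biUnion hiP hxE))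
  · refine Or.inr (Set.mem_biUnion ?_ ⟨by simp [vennCell], hxE⟩)
    simpa using ⟨i, mem_inter.mpr ⟨hiP, hiQ⟩⟩

end VennCells

lemma card_filter_inter_nonempty {α : Type*} [Fintype α] [DecidableEq α] (Q : Finset α) :
    #({P | (P ∩ Q).Nonempty} : Finset (Finset α)) =
      2 ^ Fintype.card α - 2 ^ (Fintype.card α - #Q) := by
  have hdisj : ({P | ¬(P ∩ Q).Nonempty} : Finset (Finset α)) = Qᶜ.powerset := by
    ext P
    simp [subset_compl_iff_disjoint_right, disjoint_iff_inter_eq_empty]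
  have := card_filter_add_card_filter_not (s := (univ : Finset (Finset α)))
    (fun P => (P ∩ Q).Nonempty)
  rw [hdisj, card_powerset, card_compl, card_univ, Fintype.card_finset] at this
  omega

lemma measureReal_sdiff_lt_of_eq_mul_floor {Ω : Type*} [MeasurableSpace Ω] {ν : Measure Ω}
    [IsFiniteMeasure ν] {S E : Set Ω} {ξ : ℝ} (hξ : 0 < ξ) (hES : E ⊆ S)
    (hE : MeasurableSet E) (hνE : ν E = ENNReal.ofReal (ξ * ⌊ν.real S / ξ⌋)) :
    ν.real (S \ E) < ξ := by
  have hνE' : ν.real E = ⌊ν.real S / ξ⌋ * ξ := by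
    rw [measureReal_def, hνE, ENNReal.toReal_ofReal, mul_comm]
    positivity
  rw [measureReal_sdiff hES hE, hνE']
  exact Int.sub_floor_div_mul_lt _ hξ

lemma measureReal_sub_lt_of_subset_union_biUnion {Ω β : Type*} [MeasurableSpace Ω]
    {ν : Measure Ω} [IsFiniteMeasure ν] {U V : Set Ω} {s : Finset β} {D : β → Set Ω} {ξ : ℝ}
    (hs : s.Nonempty) (hU : U ⊆ V ∪ ⋃ b ∈ s, D b) (hD : ∀ b ∈ s, ν.real (D b) < ξ) :
    ν.real U - ν.real V < ξ * #s := by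
  have hsum : ∑ b ∈ s, ν.real (D b) < ∑ _b ∈ s, ξ := sum_lt_sum_of_nonempty hs hD
  rw [sum_const, nsmul_eq_mul, mul_comm] at hsum
  have := (measureReal_mono (μ := ν) hU).trans
    ((measureReal_union_le _ _).trans (add_le_add le_rfl (measureReal_biUnion_finset_le s D)))
  linarith

theorem stmt_7_general {Ω : Type*} [MeasurableSpace Ω] (ν : Measure Ω) [IsFiniteMeasure ν]
    (n : ℕ) (A : Fin n → Set Ω)
    (ξ : ℝ) (hξ : 0 < ξ)
    (S : Finset (Fin n) → Set Ω)
    (hS : ∀ Q : Finset (Fin n), Q.Nonempty →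
      S Q = (⋂ i ∈ Q, A i) \ (⋃ i ∈ Qᶜ, A i))
    (E : Finset (Fin n) → Set Ω)
    (hEsub : ∀ Q : Finset (Fin n), Q.Nonempty → E Q ⊆ S Q)
    (hEmeas : ∀ Q : Finset (Fin n), Q.Nonempty → MeasurableSet (E Q))
    (hEval : ∀ Q : Finset (Fin n), Q.Nonempty →
      ν (E Q) = ENNReal.ofReal (ξ * ⌊(ν (S Q)).toReal / ξ⌋))
    (A' : Fin n → Set Ω)
    (hA' : ∀ k, A' k = ⋃ Q ∈ {Q : Finset (Fin n) | k ∈ Q}, E Q) :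
    ∀ Q : Finset (Fin n), Q.Nonempty →
      ν (⋃ i ∈ Q, A' i) ≤ ν (⋃ i ∈ Q, A i) ∧
      (ν (⋃ i ∈ Q, A i)).toReal - (ν (⋃ i ∈ Q, A' i)).toReal
        < ξ * ((2 : ℝ) ^ n - 2 ^ (n - Q.card)) := by
  obtain rfl : A' = _ := funext hA'
  intro Q hQ
  have hcell : ∀ P : Finset (Fin n), P.Nonempty → S P = vennCell A P := hS
  refine ⟨measure_mono (biUnion_biUnion_subset_biUnion
    (fun P hP => (hcell P hP).symm ▸ hEsub P hP) Q), ?_⟩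
  have hPs : ({P | (P ∩ Q).Nonempty} : Finset (Finset (Fin n))).Nonempty :=
    ⟨Q, by simpa using hQ⟩
  have hlt := measureReal_sub_lt_of_subset_union_biUnion hPs
    (biUnion_subset_union_biUnion_vennCell_sdiff A E Q) fun P hP => by
      have hP : P.Nonempty := (mem_filter.mp hP).2.mono inter_subset_left
      rw [← hcell P hP]
      exact measureReal_sdiff_lt_of_eq_mul_floor hξ (hEsub P hP) (hEmeas P hP) (hEval P hP)
  rw [card_filter_inter_nonempty, Fintype.card_fin, Nat.cast_sub (Nat.pow_le_pow_right two_pos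
    (Nat.sub_le n #Q))] at hlt
  exact_mod_cast hlt

theorem stmt_7 {Ω : Type*} [MeasurableSpace Ω] (ν : Measure Ω) [IsFiniteMeasure ν]
    (hna : ∀ A : Set Ω, MeasurableSet A → 0 < ν A →
      ∃ B ⊆ A, MeasurableSet B ∧ 0 < ν B ∧ ν B < ν A)
    (n : ℕ) (A : Fin n → Set Ω) (hA : ∀ k, MeasurableSet (A k))
    (ξ : ℝ) (hξ : 0 < ξ)
    (S : Finset (Fin n) → Set Ω)
    (hS : ∀ Q : Finset (Fin n), Q.Nonempty →
      S Q = (⋂ i ∈ Q, A i) \ (⋃ i ∈ Qᶜ, A i))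
    (E : Finset (Fin n) → Set Ω)
    (hEsub : ∀ Q : Finset (Fin n), Q.Nonempty → E Q ⊆ S Q)
    (hEmeas : ∀ Q : Finset (Fin n), Q.Nonempty → MeasurableSet (E Q))
    (hEval : ∀ Q : Finset (Fin n), Q.Nonempty →
      ν (E Q) = ENNReal.ofReal (ξ * ⌊(ν (S Q)).toReal / ξ⌋))
    (A' : Fin n → Set Ω)
    (hA' : ∀ k, A' k = ⋃ Q ∈ {Q : Finset (Fin n) | k ∈ Q}, E Q) :
    ∀ Q : Finset (Fin n), Q.Nonempty →
      ν (⋃ i ∈ Q, A' i) ≤ ν (⋃ i ∈ Q, A i) ∧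
      (ν (⋃ i ∈ Q, A i)).toReal - (ν (⋃ i ∈ Q, A' i)).toReal
        < ξ * ((2 : ℝ) ^ n - 2 ^ (n - Q.card)) :=
  stmt_7_general ν n A ξ hξ S hS E hEsub hEmeas hEval A' hA'
end
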